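/- arXiv:1007.1234 — 3 statements merged into one kernel-verified Lean document; each statement's English description precedes it below -/
import Mathlib

section
/- Let D ∈ ℝ^{n×n} and S ∈ ℝ^{(n-p)×n} with rank S = n-p and ker S ⊆ ker D, and let D̂ = S D S⁺ be the pseudo-similar matrix. If λ ∈ ℂ is a nonzero eigenvalue of D, then λ is an eigenvalue of D̂ with the same algebraic and geometric multiplicity, and S restricts to a bijection from the generalized λ-eigenspace of D onto that of D̂. -/
/-!
Because `ker S ⊆ ker D` and `S S⁺ = 1`, the matrix `D` factors as `D = B S` with `B = D S⁺`, while
`D̂ = S B`. For linear maps `A : V → W`, `B : W → V` and `μ ≠ 0`, the map `A` intertwines `B A`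
with `A B`, so it sends generalized `μ`-eigenspaces of `B A` into those of `A B`; it is injective
there, since `A v = 0` puts `v` in the kernel of `B A`, which meets a generalized `μ`-eigenspace
trivially. Running the same argument with `B` gives equal dimensions, hence bijectivity, and the
algebraic multiplicity is the dimension of the maximal generalized eigenspace.
-/

open Matrix

/-- The Moore–Penrose pseudo-inverse of a full-row-rank matrix: `S⁺ = Sᵀ(SSᵀ)⁻¹`. -/
noncomputable def moorePenrose {k n : ℕ} (S : Matrix (Fin k) (Fin n) ℝ) :
    Matrix (Fin n) (Fin k) ℝ :=
  Sᵀ * (S * Sᵀ)⁻¹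

namespace Module.End

section Intertwining

variable {R M N : Type*} [CommRing R] [AddCommGroup M] [Module R M] [AddCommGroup N] [Module R N]

lemma mapsTo_genEigenspace_of_comp_eq {f : End R M} {g : End R N} {A : M →ₗ[R] N}
    (h : A ∘ₗ f = g ∘ₗ A) (μ : R) (k : ℕ∞) :
    Set.MapsTo A (f.genEigenspace μ k) (g.genEigenspace μ k) := by
  have hμ : (g - μ • 1) ∘ₗ A = A ∘ₗ (f - μ • 1) := by
    rw [LinearMap.sub_comp, LinearMap.comp_sub, h, LinearMap.smul_comp, LinearMap.comp_smul]
    rfl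
  intro x hx
  simp only [SetLike.mem_coe, mem_genEigenspace, LinearMap.mem_ker] at hx ⊢
  obtain ⟨l, hl, hx⟩ := hx
  refine ⟨l, hl, ?_⟩
  rw [← LinearMap.comp_apply, commute_pow_left_of_commute hμ, LinearMap.comp_apply, hx, map_zero]

lemma mapsTo_genEigenspace_comp (A : M →ₗ[R] N) (B : N →ₗ[R] M) (μ : R) (k : ℕ∞) :
    Set.MapsTo A (genEigenspace (B ∘ₗ A) μ k) (genEigenspace (A ∘ₗ B) μ k) :=
  mapsTo_genEigenspace_of_comp_eq (f := B ∘ₗ A) (g := A ∘ₗ B) rfl μ k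

lemma injOn_genEigenspace_comp [IsDomain R] [IsTorsionFree R M] (A : M →ₗ[R] N)
    (B : N →ₗ[R] M) {μ : R} (hμ : μ ≠ 0) (k : ℕ∞) :
    Set.InjOn A (genEigenspace (B ∘ₗ A) μ k) := by
  intro x hx y hy hxy
  have hker : x - y ∈ genEigenspace (B ∘ₗ A) 0 1 := by
    simp [map_sub, hxy]
  have hmem : x - y ∈ genEigenspace (B ∘ₗ A) μ k := sub_mem hx hy
  exact sub_eq_zero.mp <|
    Submodule.disjoint_def.mp (disjoint_genEigenspace (B ∘ₗ A) hμ k 1) _ hmem hker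

lemma injective_restrict_genEigenspace_comp [IsDomain R] [IsTorsionFree R M] (A : M →ₗ[R] N)
    (B : N →ₗ[R] M) {μ : R} (hμ : μ ≠ 0) (k : ℕ∞) :
    Function.Injective (A.restrict (mapsTo_genEigenspace_comp A B μ k)) :=
  fun x y hxy =>
    Subtype.ext <| injOn_genEigenspace_comp A B hμ k x.2 y.2 (congrArg Subtype.val hxy)

end Intertwining

section FiniteDimensional

variable {K V W : Type*} [Field K] [AddCommGroup V] [Module K V] [AddCommGroup W] [Module K W]
  [FiniteDimensional K V] [FiniteDimensional K W] (A : V →ₗ[K] W) (B : W →ₗ[K] V) {μ : K}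

lemma finrank_genEigenspace_comp (hμ : μ ≠ 0) (k : ℕ∞) :
    finrank K (genEigenspace (B ∘ₗ A) μ k) = finrank K (genEigenspace (A ∘ₗ B) μ k) :=
  le_antisymm
    (LinearMap.finrank_le_finrank_of_injective (injective_restrict_genEigenspace_comp A B hμ k))
    (LinearMap.finrank_le_finrank_of_injective (injective_restrict_genEigenspace_comp B A hμ k))

lemma bijOn_genEigenspace_comp (hμ : μ ≠ 0) (k : ℕ∞) :
    Set.BijOn A (genEigenspace (B ∘ₗ A) μ k) (genEigenspace (A ∘ₗ B) μ k) := by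
  refine ⟨mapsTo_genEigenspace_comp A B μ k, injOn_genEigenspace_comp A B hμ k, fun y hy => ?_⟩
  obtain ⟨x, hx⟩ := (LinearMap.injective_iff_surjective_of_finrank_eq_finrank
    (finrank_genEigenspace_comp A B hμ k)).mp
    (injective_restrict_genEigenspace_comp A B hμ k) ⟨y, hy⟩
  exact ⟨x, x.2, congrArg Subtype.val hx⟩

lemma rootMultiplicity_charpoly_comp (hμ : μ ≠ 0) :
    (B ∘ₗ A).charpoly.rootMultiplicity μ = (A ∘ₗ B).charpoly.rootMultiplicity μ := by
  rw [← LinearMap.finrank_maxGenEigenspace_eq, ← LinearMap.finrank_maxGenEigenspace_eq,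
    finrank_genEigenspace_comp A B hμ ⊤]

end FiniteDimensional

end Module.End

namespace Matrix

variable {K R l m n : Type*} [Fintype m] [Fintype n]

lemma isUnit_of_rank_eq_card [Field K] [DecidableEq n] {A : Matrix n n K}
    (h : A.rank = Fintype.card n) : IsUnit A := by
  refine mulVec_surjective_iff_isUnit.mp fun w => ?_
  have hrange : LinearMap.range A.mulVecLin = ⊤ :=
    Submodule.eq_top_of_finrank_eq (by rw [Module.finrank_fintype_fun_eq_card]; exact h)
  exact LinearMap.range_eq_top.mp hrange w

lemma mul_mul_eq_self_of_mul_eq_one [CommRing R] [DecidableEq m] {D : Matrix l n R}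
    {S : Matrix m n R} {T : Matrix n m R} (hST : S * T = 1)
    (hker : ∀ v, S *ᵥ v = 0 → D *ᵥ v = 0) : D * T * S = D := by
  refine ext_iff_mulVec.mpr fun v => ?_
  have hS : S *ᵥ (v - T *ᵥ S *ᵥ v) = 0 := by
    rw [mulVec_sub, mulVec_mulVec, hST, one_mulVec, sub_self]
  rw [← mulVec_mulVec, ← mulVec_mulVec, eq_comm, ← sub_eq_zero, ← mulVec_sub]
  exact hker _ hS

end Matrix

lemma mul_moorePenrose {k n : ℕ} {S : Matrix (Fin k) (Fin n) ℝ} (hS : S.rank = k) :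
    S * moorePenrose S = 1 := by
  have hunit : IsUnit (S * Sᵀ) :=
    isUnit_of_rank_eq_card (by rw [rank_self_mul_transpose, hS, Fintype.card_fin])
  rw [moorePenrose, ← Matrix.mul_assoc, mul_nonsing_inv _ ((isUnit_iff_isUnit_det _).mp hunit)]

lemma map_ofReal_mul {l m n : Type*} [Fintype m] (M : Matrix l m ℝ) (N : Matrix m n ℝ) :
    (M * N).map Complex.ofReal = M.map Complex.ofReal * N.map Complex.ofReal :=
  Matrix.map_mul (f := Complex.ofRealHom)

open Module.End Polynomial in
/-- Let `D̂ = S D S⁺` be pseudo-similar to `D` via a full-row-rank `S` with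
`ker S ⊆ ker D`.  Every nonzero eigenvalue `λ ∈ ℂ` of `D` is an eigenvalue of `D̂`
with the same algebraic multiplicity (as a root of the characteristic polynomial)
and the same geometric multiplicity, and `S` restricts to a bijection from the
generalized `λ`-eigenspace of `D` onto that of `D̂`. -/
theorem pseudo_similar_nonzero_spectrum {n p : ℕ}
    (D : Matrix (Fin n) (Fin n) ℝ) (S : Matrix (Fin (n - p)) (Fin n) ℝ)
    (hrank : S.rank = n - p)
    (hker : ∀ v : Fin n → ℝ, S.mulVec v = 0 → D.mulVec v = 0)
    (lam : ℂ) (hlam : lam ≠ 0)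
    (heig : (D.map (Complex.ofReal)).charpoly.IsRoot lam) :
    letI Dc := D.map (Complex.ofReal)
    letI Sc := S.map (Complex.ofReal)
    letI Dhatc := (S * D * moorePenrose S).map (Complex.ofReal)
    (Dhatc.charpoly.IsRoot lam ∧
      Dc.charpoly.rootMultiplicity lam = Dhatc.charpoly.rootMultiplicity lam) ∧
    (Module.finrank ℂ (Module.End.eigenspace Dc.mulVecLin lam) =
      Module.finrank ℂ (Module.End.eigenspace Dhatc.mulVecLin lam)) ∧
    Set.BijOn (fun v => Sc.mulVec v)
      ((Module.End.maxGenEigenspace Dc.mulVecLin lam : Submodule ℂ (Fin n → ℂ)) : Set (Fin n → ℂ))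
      ((Module.End.maxGenEigenspace Dhatc.mulVecLin lam :
        Submodule ℂ (Fin (n - p) → ℂ)) : Set (Fin (n - p) → ℂ)) := by
  set Sc := S.map Complex.ofReal
  set Bc := (D * moorePenrose S).map Complex.ofReal
  have hD : (D.map Complex.ofReal).mulVecLin = Bc.mulVecLin ∘ₗ Sc.mulVecLin := by
    rw [← mulVecLin_mul, ← map_ofReal_mul,
      mul_mul_eq_self_of_mul_eq_one (mul_moorePenrose hrank) hker]
  have hDhat :
      ((S * D * moorePenrose S).map Complex.ofReal).mulVecLin = Sc.mulVecLin ∘ₗ Bc.mulVecLin := by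
    rw [← mulVecLin_mul, ← map_ofReal_mul, Matrix.mul_assoc]
  have hmult : (D.map Complex.ofReal).charpoly.rootMultiplicity lam =
      ((S * D * moorePenrose S).map Complex.ofReal).charpoly.rootMultiplicity lam := by
    rw [← charpoly_mulVecLin, ← charpoly_mulVecLin, hD, hDhat]
    exact rootMultiplicity_charpoly_comp _ _ hlam
  refine ⟨⟨?_, hmult⟩, ?_, ?_⟩
  · rw [← rootMultiplicity_pos (charpoly_monic _).ne_zero, ← hmult,
      rootMultiplicity_pos (charpoly_monic _).ne_zero]
    exact heig
  · rw [hD, hDhat]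
    exact finrank_genEigenspace_comp _ _ hlam 1
  · rw [hD, hDhat]
    exact bijOn_genEigenspace_comp _ _ hlam ⊤
end

section
/- Suppose D(t) ∈ ℝ^{n×n} is measurable locally bounded with D(t)e = 0 for all t, and its reduced matrix D̂(t) satisfies limsup_{t→∞} t⁻¹ ∫₀ᵗ sup_{|y|=1} yᵀ D̂(u) y du < 0. Then the time-dependent consensus protocol ẋ = D(t)x is convergent: every solution satisfies x_i(t) - x_j(t) → 0 as t → ∞ for all i, j. -/
/-!
With `z = S̃ x`, the conditions `D(t) e = 0` and `ker S̃ = span e` give `ż = D̂(t) z`, and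
`x - S̃⁺ z` is a consensus vector, so it suffices to show `z → 0`. Since
`d/dt |z|² = 2 zᵀ D̂ z ≤ 2 γ |z|²` and `γ` is merely measurable, one integrates the logarithmic
derivative of `|z|²` to get `|z(t)|² ≤ |z(0)|² exp (2 ∫₀ᵗ γ)`. This is legitimate because, by
Grönwall's inequality with the constant rate given by local boundedness of `D`, a solution with
`z(0) ≠ 0` never vanishes. Finally the limsup condition gives `∫₀ᵗ γ ≤ c t` eventually for some
`c < 0`.
-/

open Matrix Filter

open MeasureTheory Set Topology Real

lemma mul_moorePenrose_of_rank_eq {k n : ℕ} {S : Matrix (Fin k) (Fin n) ℝ} (h : S.rank = k) :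
    S * moorePenrose S = 1 := by
  have hunit : IsUnit (S * Sᵀ) := by
    rw [← mulVec_surjective_iff_isUnit]
    exact (LinearMap.range_eq_top (f := (S * Sᵀ).mulVecLin)).1 (Submodule.eq_top_of_finrank_eq
      (by rw [← rank, rank_self_mul_transpose, h, Module.finrank_fin_fun]))
  rw [moorePenrose, ← Matrix.mul_assoc]
  exact mul_nonsing_inv _ ((isUnit_iff_isUnit_det _).1 hunit)

lemma exists_eq_mulVec_mulVec_add_const {R m n : Type*} [CommRing R] [Fintype m]
    [DecidableEq m] [Fintype n] {S : Matrix m n R} {P : Matrix n m R} (hSP : S * P = 1)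
    (hker : ∀ v, S *ᵥ v = 0 ↔ ∃ c : R, v = fun _ => c) (v : n → R) :
    ∃ c : R, v = P *ᵥ S *ᵥ v + fun _ => c := by
  obtain ⟨c, hc⟩ := (hker (v - P *ᵥ S *ᵥ v)).1 <| by
    rw [mulVec_sub, mulVec_mulVec, hSP, one_mulVec, sub_self]
  exact ⟨c, by rw [← hc, add_sub_cancel]⟩

section Conjugation

variable {l m n o : Type*} [Fintype m] [Fintype n]

lemma exists_abs_mul_mul_apply_le [Fintype l] [Fintype o] (S : Matrix l m ℝ)
    (P : Matrix n o ℝ) :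
    ∃ C, ∀ (B : Matrix m n ℝ) (M : ℝ), 0 ≤ M → (∀ i j, |B i j| ≤ M) →
      ∀ a b, |(S * B * P) a b| ≤ C * M := by
  -- `B ↦ S B P` is linear between finite-dimensional sup-normed spaces, hence bounded
  let L : (m → n → ℝ) →L[ℝ] (l → o → ℝ) :=
    LinearMap.toContinuousLinearMap (mulRightLinearMap l ℝ P ∘ₗ mulLeftLinearMap n ℝ S)
  refine ⟨‖L‖, fun B M hM hB a b => ?_⟩
  have hBM : ‖show m → n → ℝ from B‖ ≤ M :=
    (pi_norm_le_iff_of_nonneg hM).2 fun i => (pi_norm_le_iff_of_nonneg hM).2 (hB i)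
  calc |(S * B * P) a b| = ‖L B a b‖ := rfl
    _ ≤ ‖L B‖ := (norm_le_pi_norm (L B a) b).trans (norm_le_pi_norm (L B) a)
    _ ≤ ‖L‖ * M := L.le_of_opNorm_le_of_le le_rfl hBM

lemma exists_abs_mul_mul_apply_le_of_locallyBounded [Fintype l] [Fintype o]
    {B : ℝ → Matrix m n ℝ} (hB : ∀ T > (0 : ℝ), ∃ M : ℝ, ∀ t ∈ Icc 0 T, ∀ i j, |B t i j| ≤ M)
    (S : Matrix l m ℝ) (P : Matrix n o ℝ) :
    ∀ T > (0 : ℝ), ∃ M : ℝ, ∀ t ∈ Icc 0 T, ∀ a b, |(S * B t * P) a b| ≤ M := by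
  obtain ⟨C, hC⟩ := exists_abs_mul_mul_apply_le S P
  intro T hT
  obtain ⟨M, hM⟩ := hB T hT
  exact ⟨C * max M 0, fun t ht => hC _ _ (le_max_right M 0)
    fun i j => (hM t ht i j).trans (le_max_left M 0)⟩

lemma measurable_mul_mul_apply {α : Type*} [MeasurableSpace α] {B : α → Matrix m n ℝ}
    (hB : ∀ i j, Measurable fun t => B t i j) (S : Matrix l m ℝ) (P : Matrix n o ℝ) (a : l)
    (b : o) : Measurable fun t => (S * B t * P) a b := by
  simp only [mul_apply]
  fun_prop

end Conjugation

section QuadraticForm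

variable {ι : Type*} [Fintype ι]

lemma sq_le_dotProduct_self (y : ι → ℝ) (a : ι) : y a ^ 2 ≤ y ⬝ᵥ y := by
  simpa [dotProduct, sq] using
    Finset.single_le_sum (fun i _ => mul_self_nonneg (y i)) (Finset.mem_univ a)

lemma abs_mul_le_dotProduct_self (y : ι → ℝ) (a b : ι) : |y a * y b| ≤ y ⬝ᵥ y := by
  rw [abs_mul]
  nlinarith [sq_abs (y a), sq_abs (y b), sq_nonneg (|y a| - |y b|),
    sq_le_dotProduct_self y a, sq_le_dotProduct_self y b]

lemma abs_dotProduct_mulVec_le {A : Matrix ι ι ℝ} {M : ℝ} (hA : ∀ a b, |A a b| ≤ M)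
    (y : ι → ℝ) : |y ⬝ᵥ A *ᵥ y| ≤ Fintype.card ι ^ 2 * M * (y ⬝ᵥ y) := by
  have hterm : ∀ a b, |y a * (A a b * y b)| ≤ M * (y ⬝ᵥ y) := fun a b => by
    rw [mul_left_comm, abs_mul]
    exact mul_le_mul (hA a b) (abs_mul_le_dotProduct_self y a b) (abs_nonneg _)
      ((abs_nonneg _).trans (hA a b))
  calc |y ⬝ᵥ A *ᵥ y| = |∑ a, ∑ b, y a * (A a b * y b)| := by
        simp only [dotProduct, mulVec, Finset.mul_sum]
    _ ≤ ∑ a, ∑ b, |y a * (A a b * y b)| := (Finset.abs_sum_le_sum_abs _ _).trans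
        (Finset.sum_le_sum fun a _ => Finset.abs_sum_le_sum_abs _ _)
    _ ≤ ∑ _a : ι, ∑ _b : ι, M * (y ⬝ᵥ y) := by gcongr with a _ b _; exact hterm a b
    _ = Fintype.card ι ^ 2 * M * (y ⬝ᵥ y) := by simp; ring

/-- Its supremum is the logarithmic 2-norm of `A`; for `A = D̂(t)` that is the paper's `γ(t)`. -/
def numericalRange (A : Matrix ι ι ℝ) : Set ℝ :=
  {r | ∃ y : ι → ℝ, y ⬝ᵥ y = 1 ∧ r = y ⬝ᵥ A *ᵥ y}

lemma dotProduct_mulVec_le_of_isLUB {A : Matrix ι ι ℝ} {g : ℝ}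
    (hg : IsLUB (numericalRange A) g) (y : ι → ℝ) : y ⬝ᵥ A *ᵥ y ≤ g * (y ⬝ᵥ y) := by
  have hy0 : 0 ≤ y ⬝ᵥ y := dotProduct_star_self_nonneg y
  obtain hy | hy := hy0.eq_or_lt
  · rw [dotProduct_self_eq_zero.1 hy.symm]; simp
  have hrr : √(y ⬝ᵥ y)⁻¹ * √(y ⬝ᵥ y)⁻¹ = (y ⬝ᵥ y)⁻¹ := mul_self_sqrt (inv_nonneg.2 hy0)
  have hunit : (√(y ⬝ᵥ y)⁻¹ • y) ⬝ᵥ (√(y ⬝ᵥ y)⁻¹ • y) = 1 := by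
    rw [smul_dotProduct, dotProduct_smul, smul_eq_mul, smul_eq_mul, ← mul_assoc, hrr,
      inv_mul_cancel₀ hy.ne']
  have hle := hg.1 ⟨_, hunit, rfl⟩
  rw [mulVec_smul, smul_dotProduct, dotProduct_smul, smul_eq_mul, smul_eq_mul, ← mul_assoc, hrr,
    inv_mul_le_iff₀ hy] at hle
  exact hle.trans_eq (mul_comm _ _)

lemma abs_le_of_isLUB_numericalRange {A : Matrix ι ι ℝ} {g K : ℝ}
    (hA : ∀ y, |y ⬝ᵥ A *ᵥ y| ≤ K * (y ⬝ᵥ y)) (hg : IsLUB (numericalRange A) g) : |g| ≤ K := by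
  obtain ⟨_, ⟨y, hy, rfl⟩⟩ := hg.nonempty
  have hyK := hA y
  rw [hy, mul_one, abs_le] at hyK
  refine abs_le.2 ⟨hyK.1.trans (hg.1 ⟨y, hy, rfl⟩), hg.2 ?_⟩
  rintro _ ⟨w, hw, rfl⟩
  simpa [hw] using (le_abs_self _).trans (hA w)

/-- The supremum over the unit sphere equals the supremum over a countable dense subset of it. -/
lemma measurable_of_isLUB_numericalRange {α : Type*} [MeasurableSpace α] {A : α → Matrix ι ι ℝ}
    (hA : ∀ i j, Measurable fun t => A t i j) {γ : α → ℝ}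
    (hγ : ∀ t, IsLUB (numericalRange (A t)) (γ t)) : Measurable γ := by
  obtain ⟨s, hs_count, hs_dense⟩ :=
    TopologicalSpace.exists_countable_dense {y : ι → ℝ // y ⬝ᵥ y = 1}
  have := hs_count.to_subtype
  refine Measurable.isLUB (f := fun (y : s) t => y.1.1 ⬝ᵥ A t *ᵥ y.1.1) (fun y => ?_) fun t => ?_
  · simp only [dotProduct, mulVec]
    fun_prop
  refine ⟨?_, fun b hb => (hγ t).2 ?_⟩
  · rintro _ ⟨y, rfl⟩
    exact (hγ t).1 ⟨y.1.1, y.1.2, rfl⟩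
  rintro _ ⟨y, hy, rfl⟩
  have hclosed : IsClosed {w : {y : ι → ℝ // y ⬝ᵥ y = 1} | w.1 ⬝ᵥ A t *ᵥ w.1 ≤ b} :=
    isClosed_le (by fun_prop) continuous_const
  exact closure_minimal (fun w hw => hb ⟨⟨w, hw⟩, rfl⟩) hclosed (hs_dense ⟨y, hy⟩)

lemma hasDerivAt_dotProduct_self {z : ℝ → ι → ℝ} {z' : ι → ℝ} {t : ℝ} (hz : HasDerivAt z z' t) :
    HasDerivAt (fun s => z s ⬝ᵥ z s) (2 * (z t ⬝ᵥ z')) t := by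
  refine (HasDerivAt.fun_sum fun a (_ : a ∈ Finset.univ) =>
    (hasDerivAt_pi.1 hz a).fun_mul (hasDerivAt_pi.1 hz a)).congr_deriv ?_
  simp only [dotProduct, Finset.mul_sum]
  exact Finset.sum_congr rfl fun a _ => by ring

lemma tendsto_zero_of_tendsto_dotProduct_self {α : Type*} {l : Filter α} {z : α → ι → ℝ}
    (hz : Tendsto (fun t => z t ⬝ᵥ z t) l (𝓝 0)) : Tendsto z l (𝓝 0) := by
  refine squeeze_zero_norm (fun t => (pi_norm_le_iff_of_nonneg (sqrt_nonneg _)).2 fun a =>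
    (Real.norm_eq_abs _).trans_le (abs_le_sqrt (sq_le_dotProduct_self (z t) a))) ?_
  have hsqrt := (continuous_sqrt.tendsto 0).comp hz
  rwa [sqrt_zero] at hsqrt

end QuadraticForm

section Gronwall

variable {f f' : ℝ → ℝ} {a b : ℝ}

lemma le_mul_exp_of_deriv_le_mul {K : ℝ} (hf : ∀ t ∈ Icc a b, HasDerivAt f (f' t) t)
    (hle : ∀ t ∈ Ico a b, f' t ≤ K * f t) : ∀ t ∈ Icc a b, f t ≤ f a * exp (K * (t - a)) := by
  intro t ht
  rw [← gronwallBound_ε0]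
  exact le_gronwallBound_of_liminf_deriv_right_le
    (fun s hs => (hf s hs).continuousAt.continuousWithinAt)
    (fun s hs _ hr => (hf s (Ico_subset_Icc_self hs)).hasDerivWithinAt.liminf_right_slope_le hr)
    le_rfl (fun s hs => (hle s hs).trans_eq (add_zero _).symm) t ht

lemma le_mul_exp_integral_of_deriv_le_mul_of_pos {g : ℝ → ℝ} (hab : a ≤ b)
    (hpos : ∀ t ∈ Icc a b, 0 < f t) (hf : ∀ t ∈ Icc a b, HasDerivAt f (f' t) t)
    (hg : IntegrableOn g (Icc a b)) (hle : ∀ t ∈ Icc a b, f' t ≤ g t * f t) : f b ≤ f a * exp (∫ t in a..b, g t) := by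
  have hlog : log (f b) - log (f a) ≤ ∫ t in a..b, g t := by
    refine intervalIntegral.sub_le_integral_of_hasDeriv_right_of_le hab
      (fun t ht => ((hf t ht).log (hpos t ht).ne').continuousAt.continuousWithinAt)
      (fun t ht => ((hf t (Ioo_subset_Icc_self ht)).log
        (hpos t (Ioo_subset_Icc_self ht)).ne').hasDerivWithinAt) hg fun t ht => ?_
    rw [div_le_iff₀ (hpos t (Ioo_subset_Icc_self ht))]
    exact hle t (Ioo_subset_Icc_self ht)
  calc f b = exp (log (f b)) := (exp_log (hpos b (right_mem_Icc.2 hab))).symm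
    _ ≤ exp (log (f a) + ∫ t in a..b, g t) := exp_le_exp.2 (by linarith)
    _ = f a * exp (∫ t in a..b, g t) := by rw [exp_add, exp_log (hpos a (left_mem_Icc.2 hab))]

lemma le_mul_exp_integral_of_deriv_le_mul {g : ℝ → ℝ} {K : ℝ} (hab : a ≤ b) (ha : 0 ≤ f a)
    (hf : ∀ t ∈ Icc a b, HasDerivAt f (f' t) t) (hK : ∀ t ∈ Icc a b, |f' t| ≤ K * f t)
    (hg : IntegrableOn g (Icc a b)) (hle : ∀ t ∈ Icc a b, f' t ≤ g t * f t) :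
    f b ≤ f a * exp (∫ t in a..b, g t) := by
  obtain ha | ha := ha.eq_or_lt
  · rw [← ha, zero_mul]
    simpa [← ha] using le_mul_exp_of_deriv_le_mul hf
      (fun t ht => (le_abs_self _).trans (hK t (Ico_subset_Icc_self ht))) b (right_mem_Icc.2 hab)
  refine le_mul_exp_integral_of_deriv_le_mul_of_pos hab (fun t ht => ?_) hf hg hle
  have hlow := le_mul_exp_of_deriv_le_mul (f := fun s => -f s) (K := -K)
    (fun s hs => (hf s hs).neg)
    (fun s hs => by linarith [neg_abs_le (f' s), hK s (Ico_subset_Icc_self hs)]) t ht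
  have := exp_pos (-K * (t - a))
  nlinarith

end Gronwall

/-- In `ℝ` the limsup of a function that is not bounded above is the junk value `0`, so a
negative limsup forces boundedness. -/
lemma exists_neg_eventually_lt_of_limsup_neg {α : Type*} {l : Filter α} {u : α → ℝ}
    (h : limsup u l < 0) : ∃ c < 0, ∀ᶠ x in l, u x < c := by
  have hbdd : IsBoundedUnder (· ≤ ·) l u := by
    by_contra hnb
    rw [Real.limsup_of_not_isBoundedUnder hnb] at h
    exact lt_irrefl 0 h
  exact ⟨limsup u l / 2, by linarith, eventually_lt_of_limsup_lt (by linarith) hbdd⟩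

section DissipativeSystem

variable {ι : Type*} [Fintype ι] {A : ℝ → Matrix ι ι ℝ} {γ : ℝ → ℝ} {z : ℝ → ι → ℝ}

lemma dotProduct_self_le_mul_exp_integral (hmeas : ∀ a b, Measurable fun t => A t a b)
    (hloc : ∀ T > (0 : ℝ), ∃ M : ℝ, ∀ t ∈ Icc 0 T, ∀ a b, |A t a b| ≤ M)
    (hγ : ∀ t, IsLUB (numericalRange (A t)) (γ t)) (hz : ∀ t, HasDerivAt z (A t *ᵥ z t) t)
    {t : ℝ} (ht : 0 ≤ t) : z t ⬝ᵥ z t ≤ z 0 ⬝ᵥ z 0 * exp (2 * ∫ s in 0..t, γ s) := by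
  obtain ⟨M, hM⟩ := hloc (t + 1) (by linarith)
  set K := Fintype.card ι ^ 2 * M
  have hquad : ∀ s ∈ Icc 0 t, ∀ y, |y ⬝ᵥ A s *ᵥ y| ≤ K * (y ⬝ᵥ y) := fun s hs =>
    abs_dotProduct_mulVec_le (hM s ⟨hs.1, by linarith [hs.2]⟩)
  have hγint : IntegrableOn γ (Icc 0 t) :=
    Measure.integrableOn_of_bounded measure_Icc_lt_top.ne
      (measurable_of_isLUB_numericalRange hmeas hγ).aestronglyMeasurable
      (ae_restrict_of_forall_mem measurableSet_Icc fun s hs =>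
        abs_le_of_isLUB_numericalRange (hquad s hs) (hγ s))
  rw [← intervalIntegral.integral_const_mul]
  refine le_mul_exp_integral_of_deriv_le_mul (K := 2 * K) ht (dotProduct_star_self_nonneg _)
    (fun s _ => hasDerivAt_dotProduct_self (hz s)) (fun s hs => ?_) (hγint.const_mul 2)
    fun s _ => ?_
  · rw [abs_mul, abs_two, mul_assoc]
    exact mul_le_mul_of_nonneg_left (hquad s hs (z s)) zero_le_two
  · rw [mul_assoc]
    exact mul_le_mul_of_nonneg_left (dotProduct_mulVec_le_of_isLUB (hγ s) (z s)) zero_le_two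

theorem tendsto_zero_of_limsup_integral_neg (hmeas : ∀ a b, Measurable fun t => A t a b)
    (hloc : ∀ T > (0 : ℝ), ∃ M : ℝ, ∀ t ∈ Icc 0 T, ∀ a b, |A t a b| ≤ M)
    (hγ : ∀ t, IsLUB (numericalRange (A t)) (γ t))
    (hdiss : limsup (fun t : ℝ => t⁻¹ * ∫ u in (0:ℝ)..t, γ u) atTop < 0)
    (hz : ∀ t, HasDerivAt z (A t *ᵥ z t) t) : Tendsto z atTop (𝓝 0) := by
  obtain ⟨c, hc, hev⟩ := exists_neg_eventually_lt_of_limsup_neg hdiss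
  have hexp : Tendsto (fun t => z 0 ⬝ᵥ z 0 * exp (2 * c * t)) atTop (𝓝 0) := by
    simpa using (tendsto_exp_atBot.comp <|
      (tendsto_const_mul_atBot_of_neg (by linarith)).2 tendsto_id).const_mul (z 0 ⬝ᵥ z 0)
  refine tendsto_zero_of_tendsto_dotProduct_self <| tendsto_of_tendsto_of_tendsto_of_le_of_le'
    tendsto_const_nhds hexp (Eventually.of_forall fun t => dotProduct_star_self_nonneg _) ?_
  filter_upwards [hev, eventually_gt_atTop 0] with t hct ht
  have hint : ∫ u in (0:ℝ)..t, γ u ≤ t * c := ((inv_mul_lt_iff₀ ht).1 hct).le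
  calc z t ⬝ᵥ z t ≤ z 0 ⬝ᵥ z 0 * exp (2 * ∫ s in 0..t, γ s) :=
        dotProduct_self_le_mul_exp_integral hmeas hloc hγ hz ht.le
    _ ≤ z 0 ⬝ᵥ z 0 * exp (2 * c * t) :=
        mul_le_mul_of_nonneg_left (exp_le_exp.2 (by linarith)) (dotProduct_star_self_nonneg _)

end DissipativeSystem

theorem asymptotically_dissipative_convergence_general {n : ℕ}
    (D : ℝ → Matrix (Fin n) (Fin n) ℝ)
    (St : Matrix (Fin (n - 1)) (Fin n) ℝ)
    (hmeas : ∀ i j, Measurable fun t => D t i j)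
    (hloc : ∀ T > (0 : ℝ), ∃ M : ℝ, ∀ t ∈ Set.Icc 0 T, ∀ i j, |D t i j| ≤ M)
    (hDe : ∀ t, (D t).mulVec (fun _ => 1) = 0)
    (hrank : St.rank = n - 1)
    (hkerSt : ∀ v : Fin n → ℝ, St.mulVec v = 0 ↔ ∃ c : ℝ, v = fun _ => c)
    (γ : ℝ → ℝ)
    (hγ : ∀ t, IsLUB {r : ℝ | ∃ y : Fin (n - 1) → ℝ, y ⬝ᵥ y = 1 ∧
      r = y ⬝ᵥ (St * D t * moorePenrose St).mulVec y} (γ t))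
    (hdiss : limsup (fun t : ℝ => t⁻¹ * ∫ u in (0:ℝ)..t, γ u) atTop < 0) :
    ∀ x : ℝ → (Fin n → ℝ), (∀ t, HasDerivAt x ((D t).mulVec (x t)) t) →
      ∀ i j : Fin n, Tendsto (fun t => x t i - x t j) atTop (nhds 0) := by
  intro x hx i j
  set P := moorePenrose St
  have hdecomp := exists_eq_mulVec_mulVec_add_const (mul_moorePenrose_of_rank_eq hrank) hkerSt
  have hDPS : ∀ t v, D t *ᵥ v = D t *ᵥ P *ᵥ St *ᵥ v := fun t v => by
    obtain ⟨c, hc⟩ := hdecomp v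
    have hconst : (fun _ => c : Fin n → ℝ) = c • fun _ => 1 := by ext; simp
    conv_lhs => rw [hc, mulVec_add, hconst, mulVec_smul, hDe, smul_zero, add_zero]
  have hz : ∀ t, HasDerivAt (fun s => St *ᵥ x s) ((St * D t * P) *ᵥ St *ᵥ x t) t := fun t => by
    rw [← mulVec_mulVec, ← mulVec_mulVec, ← hDPS]
    exact (mulVecLin St).toContinuousLinearMap.hasFDerivAt.comp_hasDerivAt t (hx t)
  have hPz : Tendsto (fun t => P *ᵥ St *ᵥ x t) atTop (𝓝 0) := by
    have h := ((mulVecLin P).continuous_of_finiteDimensional.tendsto 0).comp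
      (tendsto_zero_of_limsup_integral_neg (measurable_mul_mul_apply hmeas St P)
        (exists_abs_mul_mul_apply_le_of_locallyBounded hloc St P) hγ hdiss hz)
    rwa [map_zero] at h
  have hxij : ∀ t, x t i - x t j = (P *ᵥ St *ᵥ x t) i - (P *ᵥ St *ᵥ x t) j := fun t => by
    obtain ⟨c, hc⟩ := hdecomp (x t)
    conv_lhs => rw [hc]
    exact add_sub_add_right_eq_sub _ _ c
  simpa [hxij] using (tendsto_pi_nhds.1 hPz i).sub (tendsto_pi_nhds.1 hPz j)

/-- If the measurable, locally bounded coupling matrix `D(t)` satisfies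
`D(t)e = 0` and is asymptotically dissipative, i.e.
`limsup_{t→∞} t⁻¹∫₀ᵗ sup_{|y|=1} yᵀ D̂(u) y du < 0` where `D̂(t) = S̃ D(t) S̃⁺`,
then the CP `ẋ = D(t)x` is convergent: every solution satisfies
`x_i(t) - x_j(t) → 0` for all `i, j`. -/
theorem asymptotically_dissipative_convergence {n : ℕ} (hn : 1 ≤ n)
    (D : ℝ → Matrix (Fin n) (Fin n) ℝ)
    (St : Matrix (Fin (n - 1)) (Fin n) ℝ)
    (hmeas : ∀ i j, Measurable fun t => D t i j)
    (hloc : ∀ T > (0 : ℝ), ∃ M : ℝ, ∀ t ∈ Set.Icc 0 T, ∀ i j, |D t i j| ≤ M)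
    (hDe : ∀ t, (D t).mulVec (fun _ => 1) = 0)
    (hrank : St.rank = n - 1)
    (hkerSt : ∀ v : Fin n → ℝ, St.mulVec v = 0 ↔ ∃ c : ℝ, v = fun _ => c)
    (γ : ℝ → ℝ)
    (hγ : ∀ t, IsLUB {r : ℝ | ∃ y : Fin (n - 1) → ℝ, y ⬝ᵥ y = 1 ∧
      r = y ⬝ᵥ (St * D t * moorePenrose St).mulVec y} (γ t))
    (hdiss : limsup (fun t : ℝ => t⁻¹ * ∫ u in (0:ℝ)..t, γ u) atTop < 0) :
    ∀ x : ℝ → (Fin n → ℝ), (∀ t, HasDerivAt x ((D t).mulVec (x t)) t) →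
      ∀ i j : Fin n, Tendsto (fun t => x t i - x t j) atTop (nhds 0) :=
  asymptotically_dissipative_convergence_general D St hmeas hloc hDe hrank hkerSt γ hγ hdiss
end

section
/- The consensus protocol ẋ = Dx with D = -Hᵀ C H on a connected undirected graph G (H the coboundary matrix, C = diag(C₁, C₂) the edge conductance matrix split over a spanning tree G̃ and the remaining edges) is convergent if and only if the (n-1)×(n-1) matrix C₁ + Qᵀ C₂ Q is positive definite, where Q is the cycle incidence matrix associated with G̃. -/
open Matrix Filter

/-- A row of a coboundary (incidence) matrix of an oriented graph: exactly one
`+1` (the positive end), one `-1` (the negative end), and zeros elsewhere. -/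
def IsEdgeRow {n : ℕ} (r : Fin n → ℝ) : Prop :=
  ∃ a b : Fin n, a ≠ b ∧ r a = 1 ∧ r b = -1 ∧ ∀ j, j ≠ a → j ≠ b → r j = 0

/-!
Since `B = -QH̃`, the matrix of the protocol factors as `D = -H̃ᵀMH̃` with `M = C₁ + QᵀC₂Q`:
it is symmetric, kills the constants, and `∑ᵢ xᵢ` is a first integral. The kernel of `H̃` is
the line of constants, so if `M` is positive definite, `-D` is coercive on the hyperplane
`∑ᵢ uᵢ = 0` and `|x - x̄|²` decays exponentially. Conversely, if `yᵀMy ≤ 0` for some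
`y = H̃u ≠ 0` with `∑ᵢ uᵢ = 0`, the energy `u·Du` is nondecreasing along the solution started
at `u`, hence so is `|u(t)|²`, which is incompatible with `u(t) → 0`.
-/

open Topology

theorem tendsto_zero_of_hasDerivAt_le_neg_mul {V V' : ℝ → ℝ} {a : ℝ} (ha : 0 < a)
    (hV : ∀ t, HasDerivAt V (V' t) t) (hV_nonneg : ∀ t, 0 ≤ V t)
    (hdecay : ∀ t, V' t ≤ -a * V t) : Tendsto V atTop (𝓝 0) := by
  have hbound : ∀ t, 0 ≤ t → V t ≤ V 0 * Real.exp (-(a * t)) := fun t ht => by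
    have := le_gronwallBound_of_liminf_deriv_right_le (b := t) (ε := 0)
      (fun s _ => (hV s).continuousAt.continuousWithinAt)
      (fun s _ _ hr => (hV s).hasDerivWithinAt.liminf_right_slope_le hr) le_rfl
      (fun s _ => (add_zero (-a * V s)).symm ▸ hdecay s) t ⟨ht, le_rfl⟩
    rwa [gronwallBound_ε0, sub_zero, neg_mul] at this
  have hexp : Tendsto (fun t => V 0 * Real.exp (-(a * t))) atTop (𝓝 0) := by
    simpa using (Real.tendsto_exp_neg_atTop_nhds_zero.comp
      (tendsto_id.const_mul_atTop ha)).const_mul (V 0)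
  exact tendsto_of_tendsto_of_tendsto_of_le_of_le' tendsto_const_nhds hexp
    (Eventually.of_forall hV_nonneg) (eventually_ge_atTop 0 |>.mono hbound)

section Calculus

variable {ι κ : Type*} [Fintype ι]

theorem HasDerivAt.dotProduct {f g : ℝ → ι → ℝ} {f' g' : ι → ℝ} {t : ℝ}
    (hf : HasDerivAt f f' t) (hg : HasDerivAt g g' t) :
    HasDerivAt (fun s => f s ⬝ᵥ g s) (f' ⬝ᵥ g t + f t ⬝ᵥ g') t := by
  simp only [_root_.dotProduct, ← Finset.sum_add_distrib]
  exact HasDerivAt.fun_sum fun i _ => (hasDerivAt_pi.1 hf i).mul (hasDerivAt_pi.1 hg i)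

theorem HasDerivAt.mulVec (A : Matrix κ ι ℝ) {x : ℝ → ι → ℝ} {v : ι → ℝ} {t : ℝ}
    (hx : HasDerivAt x v t) : HasDerivAt (fun s => A *ᵥ x s) (A *ᵥ v) t :=
  hasDerivAt_pi.2 fun i => HasDerivAt.fun_sum fun j _ => (hasDerivAt_pi.1 hx j).const_mul (A i j)

end Calculus

namespace Matrix

variable {ι κ : Type*}

section Flow

variable [Fintype ι]

def IsConsensusConvergent (D : Matrix ι ι ℝ) : Prop :=
  ∀ x : ℝ → ι → ℝ, (∀ t, HasDerivAt x (D *ᵥ x t) t) →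
    ∀ i j, Tendsto (fun t => x t i - x t j) atTop (𝓝 0)

section Exponential

-- A matrix norm is needed only to differentiate `t ↦ exp (t • D)`.
attribute [local instance] Matrix.linftyOpNormedRing Matrix.linftyOpNormedAlgebra

theorem exists_hasDerivAt_mulVec (D : Matrix ι ι ℝ) (x₀ : ι → ℝ) :
    ∃ x : ℝ → ι → ℝ, x 0 = x₀ ∧ ∀ t, HasDerivAt x (D *ᵥ x t) t := by
  classical
  refine ⟨fun t => NormedSpace.exp (t • D) *ᵥ x₀, by simp, fun t => ?_⟩
  have h := (((mulVecBilin ℝ ℝ).flip x₀).toContinuousLinearMap.hasFDerivAt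
    (x := NormedSpace.exp (t • D))).comp_hasDerivAt t
    (hasDerivAt_exp_smul_const' D t)
  exact h.congr_deriv (mulVec_mulVec _ _ _).symm

end Exponential

variable {D : Matrix ι ι ℝ} {x : ℝ → ι → ℝ}

theorem sum_eq_of_hasDerivAt_mulVec (hD : 1 ᵥ* D = 0) (hx : ∀ t, HasDerivAt x (D *ᵥ x t) t)
    (t s : ℝ) : ∑ i, x t i = ∑ i, x s i := by
  have h : ∀ t, HasDerivAt (fun s => 1 ⬝ᵥ x s) 0 t := fun t => by
    simpa [dotProduct_mulVec, hD] using (hasDerivAt_const t (1 : ι → ℝ)).dotProduct (hx t)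
  simpa only [one_dotProduct] using
    is_const_of_deriv_eq_zero (fun t => (h t).differentiableAt) (fun t => (h t).deriv) t s

theorem hasDerivAt_dotProduct_self (hx : ∀ t, HasDerivAt x (D *ᵥ x t) t) (t : ℝ) :
    HasDerivAt (fun s => x s ⬝ᵥ x s) (2 * (x t ⬝ᵥ D *ᵥ x t)) t := by
  convert (hx t).dotProduct (hx t) using 1
  rw [dotProduct_comm]; ring

theorem monotone_dotProduct_mulVec (hD : D.IsSymm) (hx : ∀ t, HasDerivAt x (D *ᵥ x t) t) :
    Monotone fun t => x t ⬝ᵥ D *ᵥ x t := by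
  refine monotone_of_hasDerivAt_nonneg (f' := fun t => 2 * (D *ᵥ x t ⬝ᵥ D *ᵥ x t))
    (fun t => ?_) fun t => mul_nonneg zero_le_two (dotProduct_star_self_nonneg (D *ᵥ x t))
  convert (hx t).dotProduct ((hx t).mulVec D) using 1
  rw [dotProduct_mulVec (x t), ← vecMul_transpose, hD.eq]; ring

theorem sum_sub_average_smul_one_eq_zero (v : ι → ℝ) :
    ∑ i, (v - ((∑ j, v j) / Fintype.card ι) • 1) i = 0 := by
  rcases isEmpty_or_nonempty ι with hι | hι
  · simp
  · have hcard : (Fintype.card ι : ℝ) ≠ 0 := Nat.cast_ne_zero.2 Fintype.card_ne_zero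
    simp [Finset.sum_sub_distrib, mul_div_cancel₀ _ hcard]

theorem tendsto_zero_of_sum_eq_zero_of_tendsto_sub {y : ℝ → ι → ℝ} (hsum : ∀ t, ∑ i, y t i = 0)
    (hdiff : ∀ i j, Tendsto (fun t => y t i - y t j) atTop (𝓝 0)) (i : ι) :
    Tendsto (fun t => y t i) atTop (𝓝 0) := by
  have : Nonempty ι := ⟨i⟩
  have hmean : ∀ t, y t i = (∑ j, (y t i - y t j)) / Fintype.card ι := fun t => by
    rw [Finset.sum_sub_distrib, hsum, Finset.sum_const, Finset.card_univ, nsmul_eq_mul,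
      sub_zero, mul_div_cancel_left₀ _ (Nat.cast_ne_zero.2 Fintype.card_ne_zero)]
  simpa only [← hmean, Finset.sum_const_zero, zero_div] using
    (tendsto_finsetSum Finset.univ fun j _ => hdiff i j).div_const (Fintype.card ι : ℝ)

theorem tendsto_zero_of_coercive (hD : 1 ᵥ* D = 0) {c : ℝ} (hc : 0 < c)
    (hcoer : ∀ u : ι → ℝ, ∑ i, u i = 0 → c * (u ⬝ᵥ u) ≤ -(u ⬝ᵥ D *ᵥ u))
    (hx : ∀ t, HasDerivAt x (D *ᵥ x t) t) (hx0 : ∑ i, x 0 i = 0) (i : ι) :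
    Tendsto (fun t => x t i) atTop (𝓝 0) := by
  have hV := tendsto_zero_of_hasDerivAt_le_neg_mul (mul_pos two_pos hc)
    (hasDerivAt_dotProduct_self hx) (fun t => dotProduct_star_self_nonneg (x t)) fun t => by
      have := hcoer (x t) ((sum_eq_of_hasDerivAt_mulVec hD hx t 0).trans hx0)
      linarith
  refine squeeze_zero_norm (fun t => Real.abs_le_sqrt ?_) (by simpa using hV.sqrt)
  simpa [dotProduct, sq] using
    Finset.single_le_sum (fun j _ => mul_self_nonneg (x t j)) (Finset.mem_univ i)

theorem isConsensusConvergent_of_coercive (hD1 : D *ᵥ 1 = 0) (hD : 1 ᵥ* D = 0) {c : ℝ}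
    (hc : 0 < c) (hcoer : ∀ u : ι → ℝ, ∑ i, u i = 0 → c * (u ⬝ᵥ u) ≤ -(u ⬝ᵥ D *ᵥ u)) :
    D.IsConsensusConvergent := by
  intro x hx i j
  set m := (∑ k, x 0 k) / Fintype.card ι
  have hu : ∀ t, HasDerivAt (fun s => x s - m • 1) (D *ᵥ (x t - m • 1)) t := fun t => by
    rw [mulVec_sub, mulVec_smul, hD1, smul_zero, sub_zero]
    exact (hx t).sub_const _
  have hu0 : ∑ k, (x 0 - m • 1) k = 0 := sum_sub_average_smul_one_eq_zero (x 0)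
  simpa using (tendsto_zero_of_coercive hD hc hcoer hu hu0 i).sub
    (tendsto_zero_of_coercive hD hc hcoer hu hu0 j)

theorem dotProduct_mulVec_neg_of_isConsensusConvergent (hDs : D.IsSymm) (hD : 1 ᵥ* D = 0)
    (hconv : D.IsConsensusConvergent) {u₀ : ι → ℝ} (hsum : ∑ i, u₀ i = 0) (hu₀ : u₀ ≠ 0) :
    u₀ ⬝ᵥ D *ᵥ u₀ < 0 := by
  by_contra! henergy
  obtain ⟨u, rfl, hu⟩ := exists_hasDerivAt_mulVec D u₀
  have hlim : Tendsto (fun t => u t ⬝ᵥ u t) atTop (𝓝 0) := by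
    have h := tendsto_zero_of_sum_eq_zero_of_tendsto_sub
      (fun t => (sum_eq_of_hasDerivAt_mulVec hD hu t 0).trans hsum) (hconv u hu)
    simpa [dotProduct] using tendsto_finsetSum Finset.univ fun i _ => (h i).mul (h i)
  have hmono : MonotoneOn (fun t => u t ⬝ᵥ u t) (Set.Ici 0) :=
    monotoneOn_of_hasDerivWithinAt_nonneg (convex_Ici 0)
      (fun t _ => (hasDerivAt_dotProduct_self hu t).continuousAt.continuousWithinAt)
      (fun t _ => (hasDerivAt_dotProduct_self hu t).hasDerivWithinAt) fun t ht =>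
        mul_nonneg zero_le_two <| henergy.trans <|
          monotone_dotProduct_mulVec hDs hu (interior_Ici.subst (motive := (t ∈ ·)) ht).le
  have hle : u 0 ⬝ᵥ u 0 ≤ 0 := ge_of_tendsto hlim <|
    (eventually_ge_atTop 0).mono fun t ht => hmono Set.self_mem_Ici ht ht
  exact hu₀ (dotProduct_self_eq_zero.1 (hle.antisymm (dotProduct_star_self_nonneg _)))

end Flow

theorem PosDef.exists_pos_mul_dotProduct_self_le [Fintype ι] {K : Matrix ι ι ℝ} (hK : K.PosDef) :
    ∃ c > 0, ∀ u : ι → ℝ, c * (u ⬝ᵥ u) ≤ u ⬝ᵥ K *ᵥ u := by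
  rcases isEmpty_or_nonempty ι with hι | hι
  · exact ⟨1, one_pos, fun u => by simp [Subsingleton.elim u 0]⟩
  let q : EuclideanSpace ℝ ι → ℝ := fun w => w.ofLp ⬝ᵥ K *ᵥ w.ofLp
  obtain ⟨v, hv, hmin⟩ := (isCompact_sphere (0 : EuclideanSpace ℝ ι) 1).exists_isMinOn
    (NormedSpace.sphere_nonempty.2 zero_le_one) (by fun_prop : Continuous q).continuousOn
  have hv0 : v.ofLp ≠ 0 := fun h => by simp_all
  refine ⟨q v, by simpa using hK.dotProduct_mulVec_pos hv0, fun u => ?_⟩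
  rcases eq_or_ne u 0 with rfl | hu
  · simp
  set r := ‖WithLp.toLp 2 u‖
  have hr : 0 < r := norm_pos_iff.2 (by simpa using hu)
  have hsq : u ⬝ᵥ u = r ^ 2 := by
    rw [EuclideanSpace.norm_sq_eq]
    simp [dotProduct, sq]
  have hmem : r⁻¹ • WithLp.toLp 2 u ∈ Metric.sphere (0 : EuclideanSpace ℝ ι) 1 := by
    simp [norm_smul, hr.ne', r]
  have hscale : q v ≤ r⁻¹ * (r⁻¹ * (u ⬝ᵥ K *ᵥ u)) := by
    simpa [q, mulVec_smul] using hmin hmem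
  calc q v * (u ⬝ᵥ u) ≤ r⁻¹ * (r⁻¹ * (u ⬝ᵥ K *ᵥ u)) * r ^ 2 := by rw [hsq]; gcongr
    _ = u ⬝ᵥ K *ᵥ u := by field_simp

section Algebra

variable {R : Type*} [CommSemiring R] {A : Matrix κ ι R} {M : Matrix κ κ R}

theorem isSymm_transpose_mul_mul [Fintype κ] (hM : M.IsSymm) : (Aᵀ * M * A).IsSymm := by
  simp [IsSymm, transpose_mul, hM.eq, Matrix.mul_assoc]

variable [Fintype ι] [Fintype κ]

theorem dotProduct_transpose_mul_mul_mulVec (v : ι → R) :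
    v ⬝ᵥ (Aᵀ * M * A) *ᵥ v = (A *ᵥ v) ⬝ᵥ M *ᵥ (A *ᵥ v) := by
  rw [← mulVec_mulVec, ← mulVec_mulVec, dotProduct_mulVec v Aᵀ, vecMul_transpose]

theorem transpose_mul_mul_mulVec_one (hA : A *ᵥ 1 = 0) : (Aᵀ * M * A) *ᵥ 1 = 0 := by
  rw [← mulVec_mulVec, hA, mulVec_zero]

theorem one_vecMul_transpose_mul_mul (hA : A *ᵥ 1 = 0) : 1 ᵥ* (Aᵀ * M * A) = 0 := by
  rw [← vecMul_vecMul, ← vecMul_vecMul, vecMul_transpose, hA, zero_vecMul, zero_vecMul]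

end Algebra

theorem transpose_fromRows_mul_fromBlocks_mul_fromRows {R l : Type*} [CommRing R] [Fintype κ]
    [Fintype l] (A : Matrix κ ι R) (Q : Matrix l κ R) (C₁ : Matrix κ κ R) (C₂ : Matrix l l R) :
    (fromRows A (-Q * A))ᵀ * fromBlocks C₁ 0 0 C₂ * fromRows A (-Q * A) =
      Aᵀ * (C₁ + Qᵀ * C₂ * Q) * A := by
  rw [transpose_fromRows, fromCols_mul_fromBlocks, fromCols_mul_fromRows]
  simp only [Matrix.mul_zero, add_zero, zero_add, transpose_mul, transpose_neg, Matrix.mul_neg,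
    Matrix.neg_mul, neg_neg, Matrix.mul_add, Matrix.add_mul, Matrix.mul_assoc]

section Rank

variable {K : Type*} [Field K] [Fintype ι] {A : Matrix κ ι K}

theorem surjective_mulVecLin_of_rank_eq_card [Fintype κ] (h : A.rank = Fintype.card κ) :
    Function.Surjective A.mulVecLin :=
  LinearMap.range_eq_top.1 (Submodule.eq_top_of_finrank_eq (by simpa [Matrix.rank] using h))

theorem ker_mulVecLin_eq_span_one (hA : A *ᵥ 1 = 0) (hrank : Fintype.card ι ≤ A.rank + 1) :
    LinearMap.ker A.mulVecLin = K ∙ 1 := by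
  refine (Submodule.eq_of_le_of_finrank_le
    ((Submodule.span_singleton_le_iff_mem _ _).2 (LinearMap.mem_ker.2 hA)) ?_).symm
  rcases isEmpty_or_nonempty ι with hι | hι
  · simp [Module.finrank_zero_of_subsingleton]
  · have := LinearMap.finrank_range_add_finrank_ker A.mulVecLin
    rw [Module.finrank_fintype_fun_eq_card] at this
    rw [finrank_span_singleton one_ne_zero]
    simp only [Matrix.rank] at hrank
    omega

end Rank

section Laplacian

variable [Fintype ι] [Fintype κ] {A : Matrix κ ι ℝ} {M : Matrix κ κ ℝ}

theorem exists_pos_mul_dotProduct_self_le_of_sum_eq_zero (hM : M.PosDef)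
    (hker : LinearMap.ker A.mulVecLin = ℝ ∙ 1) :
    ∃ c > 0, ∀ u : ι → ℝ, ∑ i, u i = 0 → c * (u ⬝ᵥ u) ≤ (A *ᵥ u) ⬝ᵥ M *ᵥ (A *ᵥ u) := by
  -- Adding the all-ones matrix makes the form positive definite without changing it on `∑ uᵢ = 0`.
  set K := Aᵀ * M * A + vecMulVec 1 1
  have hquad : ∀ u, u ⬝ᵥ K *ᵥ u = (A *ᵥ u) ⬝ᵥ M *ᵥ (A *ᵥ u) + (∑ i, u i) ^ 2 := fun u => by
    rw [add_mulVec, dotProduct_add, dotProduct_transpose_mul_mul_mulVec, vecMulVec_mulVec,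
      op_smul_eq_smul, dotProduct_smul, smul_eq_mul, dotProduct_one, one_dotProduct, sq]
  have hK : K.PosDef := by
    refine .of_dotProduct_mulVec_pos (isHermitian_iff_isSymm.2 <|
      (isSymm_transpose_mul_mul (isHermitian_iff_isSymm.1 hM.isHermitian)).add
        (transpose_vecMulVec 1 1)) fun u hu => ?_
    rw [star_trivial, hquad]
    by_cases hAu : A *ᵥ u = 0
    · obtain ⟨a, rfl⟩ := Submodule.mem_span_singleton.1 (hker ▸ LinearMap.mem_ker.2 hAu)
      obtain ⟨i, hi⟩ := Function.ne_iff.1 hu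
      have ha : a ≠ 0 := by rintro rfl; simp at hi
      have : Nonempty ι := ⟨i⟩
      rw [hAu]
      simpa using sq_pos_of_ne_zero (mul_ne_zero (Nat.cast_ne_zero.2 Fintype.card_ne_zero) ha)
    · exact add_pos_of_pos_of_nonneg (by simpa using hM.dotProduct_mulVec_pos hAu) (sq_nonneg _)
  obtain ⟨c, hc, hcK⟩ := hK.exists_pos_mul_dotProduct_self_le
  exact ⟨c, hc, fun u hu => by simpa [hquad, hu] using hcK u⟩

theorem isConsensusConvergent_neg_transpose_mul_mul_iff_posDef (hA : A *ᵥ 1 = 0)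
    (hsurj : Function.Surjective A.mulVecLin) (hker : LinearMap.ker A.mulVecLin = ℝ ∙ 1)
    (hM : M.IsSymm) : (-(Aᵀ * M * A)).IsConsensusConvergent ↔ M.PosDef := by
  have hcol : 1 ᵥ* (-(Aᵀ * M * A)) = 0 := by
    rw [vecMul_neg, one_vecMul_transpose_mul_mul hA, neg_zero]
  constructor
  · intro hconv
    refine .of_dotProduct_mulVec_pos (isHermitian_iff_isSymm.2 hM) fun y hy => ?_
    obtain ⟨x, rfl⟩ := hsurj y
    set u := x - ((∑ i, x i) / Fintype.card ι) • 1
    have hAu : A *ᵥ u = A *ᵥ x := by rw [mulVec_sub, mulVec_smul, hA, smul_zero, sub_zero]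
    have hu : u ≠ 0 := fun h => hy (by simp [← hAu, h])
    have := dotProduct_mulVec_neg_of_isConsensusConvergent (isSymm_transpose_mul_mul hM).neg
      hcol hconv (sum_sub_average_smul_one_eq_zero x) hu
    rw [neg_mulVec, dotProduct_neg, dotProduct_transpose_mul_mul_mulVec, hAu] at this
    simpa using this
  · intro hpos
    obtain ⟨c, hc, hcoer⟩ := exists_pos_mul_dotProduct_self_le_of_sum_eq_zero hpos hker
    refine isConsensusConvergent_of_coercive
      (by rw [neg_mulVec, transpose_mul_mul_mulVec_one hA, neg_zero]) hcol hc fun u hu => ?_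
    rw [neg_mulVec, dotProduct_neg, neg_neg, dotProduct_transpose_mul_mul_mulVec]
    exact hcoer u hu

end Laplacian

end Matrix

theorem IsEdgeRow.sum_eq_zero {n : ℕ} {r : Fin n → ℝ} (h : IsEdgeRow r) : ∑ j, r j = 0 := by
  obtain ⟨a, b, hab, ha, hb, h0⟩ := h
  rw [Fintype.sum_eq_add a b hab fun j hj => h0 j hj.1 hj.2, ha, hb, add_neg_cancel]

theorem consensus_undirected_iff_posdef_general {n c : ℕ}
    (Ht : Matrix (Fin (n - 1)) (Fin n) ℝ)
    (B : Matrix (Fin c) (Fin n) ℝ)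
    (Q : Matrix (Fin c) (Fin (n - 1)) ℝ)
    (c₁ : Fin (n - 1) → ℝ) (c₂ : Fin c → ℝ)
    (hHtRows : ∀ i, IsEdgeRow (Ht i))
    (hrank : Ht.rank = n - 1)
    (hQ : B = (-Q) * Ht) :
    letI H : Matrix (Fin (n - 1) ⊕ Fin c) (Fin n) ℝ := Matrix.fromRows Ht B
    letI C : Matrix (Fin (n - 1) ⊕ Fin c) (Fin (n - 1) ⊕ Fin c) ℝ :=
      Matrix.fromBlocks (Matrix.diagonal c₁) 0 0 (Matrix.diagonal c₂)
    letI D : Matrix (Fin n) (Fin n) ℝ := -(Hᵀ * C * H)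
    ((∀ x : ℝ → (Fin n → ℝ), (∀ t, HasDerivAt x (D.mulVec (x t)) t) →
        ∀ i j : Fin n, Tendsto (fun t => x t i - x t j) atTop (nhds 0)) ↔
      (Matrix.diagonal c₁ + Qᵀ * Matrix.diagonal c₂ * Q).PosDef) := by
  have hHt : Ht *ᵥ 1 = 0 := by
    ext i
    simpa [mulVec, dotProduct] using (hHtRows i).sum_eq_zero
  show IsConsensusConvergent _ ↔ _
  rw [hQ, transpose_fromRows_mul_fromBlocks_mul_fromRows]
  refine isConsensusConvergent_neg_transpose_mul_mul_iff_posDef hHt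
    (surjective_mulVecLin_of_rank_eq_card (by simpa using hrank))
    (ker_mulVecLin_eq_span_one hHt (by simp [hrank]; omega)) ?_
  exact (isSymm_diagonal c₁).add (isSymm_transpose_mul_mul (isSymm_diagonal c₂))

/-- The CP `ẋ = Dx` with `D = -HᵀCH` on a connected undirected graph (here `H`
is the coboundary matrix split as `(H̃; B)` over a spanning tree `G̃` and the
remaining edges, `B = -QH̃` with `Q` the cycle incidence matrix, and
`C = diag(C₁, C₂)` the edge conductance matrix, conductances possibly negative)
is convergent iff the `(n-1)×(n-1)` matrix `C₁ + QᵀC₂Q` is positive definite. -/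
theorem consensus_undirected_iff_posdef {n c : ℕ}
    (Ht : Matrix (Fin (n - 1)) (Fin n) ℝ)
    (B : Matrix (Fin c) (Fin n) ℝ)
    (Q : Matrix (Fin c) (Fin (n - 1)) ℝ)
    (c₁ : Fin (n - 1) → ℝ) (c₂ : Fin c → ℝ)
    (hHtRows : ∀ i, IsEdgeRow (Ht i))
    (hBRows : ∀ k, IsEdgeRow (B k))
    (hrank : Ht.rank = n - 1)
    (hQ : B = (-Q) * Ht) :
    letI H : Matrix (Fin (n - 1) ⊕ Fin c) (Fin n) ℝ := Matrix.fromRows Ht B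
    letI C : Matrix (Fin (n - 1) ⊕ Fin c) (Fin (n - 1) ⊕ Fin c) ℝ :=
      Matrix.fromBlocks (Matrix.diagonal c₁) 0 0 (Matrix.diagonal c₂)
    letI D : Matrix (Fin n) (Fin n) ℝ := -(Hᵀ * C * H)
    ((∀ x : ℝ → (Fin n → ℝ), (∀ t, HasDerivAt x (D.mulVec (x t)) t) →
        ∀ i j : Fin n, Tendsto (fun t => x t i - x t j) atTop (nhds 0)) ↔
      (Matrix.diagonal c₁ + Qᵀ * Matrix.diagonal c₂ * Q).PosDef) :=
  consensus_undirected_iff_posdef_general Ht B Q c₁ c₂ hHtRows hrank hQ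
end
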